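/- arXiv:1009.2948 — 4 statements merged into one kernel-verified Lean document; each statement's English description precedes it below -/
import Mathlib

section
/- Let D ⊂ ℝⁿ be a bounded domain. The inaccessibility function r : closure(D) → ℝ_{≥0}, defined by r(p) = min_{v ∈ S^{n-1}} f_p(v) for p ∈ D and r(p) = 0 for p ∈ ∂D, is lower-semicontinuous on closure(D). -/
open scoped RealInnerProductSpace
open Metric MeasureTheory
open scoped Classical

/-- For a point `p` and a unit vector `v`, the length of the connected component of
`(p + ℝ v) ∩ D` containing `p`, computed as the Lebesgue measure of the corresponding
set of parameters `t` (its connected component containing `0`). -/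
noncomputable def segLen {n : ℕ} (D : Set (EuclideanSpace ℝ (Fin n)))
    (p v : EuclideanSpace ℝ (Fin n)) : ℝ :=
  (volume (connectedComponentIn {t : ℝ | p + t • v ∈ D} 0)).toReal

/-- Inaccessibility of `p` in `D`: the infimum (a minimum, by lower semicontinuity)
of `f_p` over the unit sphere. -/
noncomputable def inacc {n : ℕ} (D : Set (EuclideanSpace ℝ (Fin n)))
    (p : EuclideanSpace ℝ (Fin n)) : ℝ :=
  sInf (segLen D p '' sphere (0 : EuclideanSpace ℝ (Fin n)) 1)

/-!
Along a line through `p` in direction `v`, the parameters of the segment through `p` form an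
open interval; any compact subinterval `[a, b]` of it is mapped into `D`, and by compactness
of `[a, b]` this persists for nearby `(q, w)`, so the segment through `q` in direction `w` is
at least `b - a` long. Hence `f` is jointly lower semicontinuous, and a minimum of a jointly
lower semicontinuous function over the compact unit sphere is lower semicontinuous. Outside `D`
the segment is empty, so `r` is simply `inacc D` everywhere.
-/

open Set Filter Topology
open scoped ENNReal

theorem Set.OrdConnected.exists_Icc_subset_lt_volume {C : Set ℝ} (hC : C.OrdConnected)
    (hCm : MeasurableSet C) {x : ℝ} (hx : x ∈ C) {r : ℝ≥0∞} (hr : r < volume C) :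
    ∃ a b, x ∈ Icc a b ∧ Icc a b ⊆ C ∧ r < volume (Icc a b) := by
  obtain ⟨K, hKC, hK, hrK⟩ := hCm.exists_lt_isCompact hr
  have hKne : K.Nonempty := nonempty_iff_ne_empty.2 fun h => by simp [h] at hrK
  refine ⟨min x (sInf K), max x (sSup K), ⟨min_le_left _ _, le_max_left _ _⟩,
    hC.out (min_rec' (· ∈ C) hx (hKC (hK.sInf_mem hKne)))
      (max_rec' (· ∈ C) hx (hKC (hK.sSup_mem hKne))), hrK.trans_le (measure_mono ?_)⟩
  exact fun t ht => ⟨(min_le_right _ _).trans (csInf_le hK.bddBelow ht),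
    (le_csSup hK.bddAbove ht).trans (le_max_right _ _)⟩

theorem lowerSemicontinuous_volume_connectedComponentIn_line {E : Type*} [AddCommGroup E]
    [Module ℝ E] [TopologicalSpace E] [ContinuousAdd E] [ContinuousSMul ℝ E] {D : Set E}
    (hD : IsOpen D) :
    LowerSemicontinuous fun x : E × E =>
      volume (connectedComponentIn {t : ℝ | x.1 + t • x.2 ∈ D} 0) := by
  intro x r hr
  have hS : IsOpen {t : ℝ | x.1 + t • x.2 ∈ D} := hD.preimage (by fun_prop)
  have h0 : (0 : ℝ) ∈ {t : ℝ | x.1 + t • x.2 ∈ D} :=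
    connectedComponentIn_nonempty_iff.1 (nonempty_of_measure_ne_zero (ne_bot_of_gt hr))
  obtain ⟨a, b, h0ab, habC, hrab⟩ := isPreconnected_connectedComponentIn.ordConnected
    |>.exists_Icc_subset_lt_volume hS.connectedComponentIn.measurableSet
      (mem_connectedComponentIn h0) hr
  have hline : ∀ᶠ y in 𝓝 x, ∀ t ∈ Icc a b, y.1 + t • y.2 ∈ D :=
    isCompact_Icc.eventually_forall_of_forall_eventually fun t ht =>
      (hD.preimage (by fun_prop : Continuous fun z : (E × E) × ℝ => z.1.1 + z.2 • z.1.2))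
        |>.mem_nhds (show x.1 + t • x.2 ∈ D from
          connectedComponentIn_subset {t : ℝ | x.1 + t • x.2 ∈ D} 0 (habC ht))
  filter_upwards [hline] with y hy
  exact hrab.trans_le (measure_mono (isPreconnected_Icc.subset_connectedComponentIn h0ab hy))

theorem Bornology.IsBounded.setOf_add_smul_mem {E : Type*} [NormedAddCommGroup E]
    [NormedSpace ℝ E] {D : Set E} (hD : Bornology.IsBounded D) (q : E) {w : E} (hw : w ≠ 0) :
    Bornology.IsBounded {t : ℝ | q + t • w ∈ D} := by
  obtain ⟨R, hR⟩ := hD.subset_closedBall q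
  refine (isBounded_closedBall (x := (0 : ℝ)) (r := R / ‖w‖)).subset fun t ht => ?_
  have htw : ‖t‖ * ‖w‖ ≤ R := by simpa [dist_eq_norm, norm_smul] using hR ht
  rw [mem_closedBall_zero_iff, le_div_iff₀ (norm_pos_iff.2 hw)]
  exact htw

theorem LowerSemicontinuousOn.ennreal_toReal {α : Type*} [TopologicalSpace α]
    {f : α → ℝ≥0∞} {s : Set α} (hf : LowerSemicontinuousOn f s) (hfin : ∀ x ∈ s, f x ≠ ∞) :
    LowerSemicontinuousOn (fun x => (f x).toReal) s := by
  intro x hx y hy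
  rcases lt_or_ge y 0 with hy0 | hy0
  · exact Eventually.of_forall fun _ => hy0.trans_le ENNReal.toReal_nonneg
  filter_upwards [hf x hx _ ((ENNReal.ofReal_lt_iff_lt_toReal hy0 (hfin x hx)).2 hy),
    self_mem_nhdsWithin] with z hz hzs
  exact (ENNReal.ofReal_lt_iff_lt_toReal hy0 (hfin z hzs)).1 hz

theorem LowerSemicontinuousOn.lowerSemicontinuous_sInf_image {X Y : Type*}
    [TopologicalSpace X] [TopologicalSpace Y] {g : X → Y → ℝ} {K : Set Y} (hK : IsCompact K)
    (hg : LowerSemicontinuousOn (Function.uncurry g) (univ ×ˢ K)) :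
    LowerSemicontinuous fun x => sInf (g x '' K) := by
  intro x₀ y hy
  rcases K.eq_empty_or_nonempty with rfl | hKne
  · simp only [image_empty, Real.sInf_empty] at hy ⊢
    exact Eventually.of_forall fun _ => hy
  obtain ⟨y', hyy', hy'⟩ := exists_between hy
  have hbdd : BddBelow (g x₀ '' K) :=
    (hg.comp (Continuous.prodMk_right x₀).continuousOn fun v hv => ⟨trivial, hv⟩)
      |>.bddBelow_of_isCompact hK
  have hnear : ∀ v ∈ K, ∀ᶠ z : X × Y in 𝓝 (x₀, v), z.2 ∈ K → y' < g z.1 z.2 := fun v hv =>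
    eventually_nhdsWithin_iff.1 (hg (x₀, v) ⟨trivial, hv⟩ y'
      (hy'.trans_le (csInf_le hbdd (mem_image_of_mem _ hv))))
      |>.mono fun z hz hzK => hz ⟨trivial, hzK⟩
  filter_upwards [hK.eventually_forall_of_forall_eventually
    (P := fun x v => v ∈ K → y' < g x v) hnear] with x hx
  exact hyy'.trans_le (le_csInf (hKne.image _) (forall_mem_image.2 fun v hv => (hx v hv hv).le))

section Inaccessibility

variable {n : ℕ} {D : Set (EuclideanSpace ℝ (Fin n))}

theorem lowerSemicontinuousOn_segLen (hOpen : IsOpen D) (hBdd : Bornology.IsBounded D) :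
    LowerSemicontinuousOn (fun x => segLen D x.1 x.2)
      {x : EuclideanSpace ℝ (Fin n) × EuclideanSpace ℝ (Fin n) | x.2 ≠ 0} :=
  (lowerSemicontinuous_volume_connectedComponentIn_line hOpen).lowerSemicontinuousOn _
    |>.ennreal_toReal fun x hx => (measure_mono (connectedComponentIn_subset _ _)).trans_lt
      (hBdd.setOf_add_smul_mem x.1 hx).measure_lt_top |>.ne

theorem lowerSemicontinuous_inacc (hOpen : IsOpen D) (hBdd : Bornology.IsBounded D) :
    LowerSemicontinuous (inacc D) :=
  LowerSemicontinuousOn.lowerSemicontinuous_sInf_image (isCompact_sphere 0 1)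
    ((lowerSemicontinuousOn_segLen hOpen hBdd).mono fun _ hx => ne_zero_of_mem_unit_sphere
      ⟨_, hx.2⟩)

theorem inacc_of_notMem {p : EuclideanSpace ℝ (Fin n)} (hp : p ∉ D) : inacc D p = 0 := by
  have hseg : ∀ v, segLen D p v = 0 := fun v => by
    rw [segLen, connectedComponentIn_eq_empty (by simpa using hp), measure_empty,
      ENNReal.toReal_zero]
  exact le_antisymm (Real.sInf_nonpos (forall_mem_image.2 fun v _ => (hseg v).le))
    (Real.sInf_nonneg (forall_mem_image.2 fun v _ => (hseg v).ge))

end Inaccessibility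

theorem lowerSemicontinuousOn_inacc_closure_general {n : ℕ} (D : Set (EuclideanSpace ℝ (Fin n)))
    (hOpen : IsOpen D) (hBdd : Bornology.IsBounded D) :
    LowerSemicontinuousOn (fun p => if p ∈ D then inacc D p else 0) (closure D) := by
  have hr : (fun p => if p ∈ D then inacc D p else 0) = inacc D :=
    funext fun p => by split_ifs with hp <;> simp [inacc_of_notMem, hp]
  rw [hr]
  exact (lowerSemicontinuous_inacc hOpen hBdd).lowerSemicontinuousOn _

/-- for a bounded domain `D ⊂ ℝⁿ`, the inaccessibility function on
`closure D`, given by `r(p) = min_v f_p(v)` for `p ∈ D` and `r(p) = 0` for `p ∈ ∂D`,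
is lower semicontinuous on `closure D`. -/
theorem lowerSemicontinuousOn_inacc_closure {n : ℕ} (D : Set (EuclideanSpace ℝ (Fin n)))
    (hOpen : IsOpen D) (hNe : D.Nonempty) (hBdd : Bornology.IsBounded D) :
    LowerSemicontinuousOn (fun p => if p ∈ D then inacc D p else 0) (closure D) :=
  lowerSemicontinuousOn_inacc_closure_general D hOpen hBdd
end

section
/- Let D ⊂ ℝⁿ be a bounded domain which is moreover convex. Then the inaccessibility function r : D → ℝ₊, r(p) = min_{v ∈ S^{n-1}} f_p(v), is continuous on D. -/
open scoped RealInnerProductSpace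
open Metric MeasureTheory

/-!
For convex `D` the parameter set `{t | p + t • v ∈ D}` of a chord is a bounded interval, so
`f_p(v)` is its diameter. The parameter set at `a • p + b • q` contains the Minkowski combination
of those at `p` and `q`, and in `ℝ` diameters add under Minkowski sums, so `p ↦ f_p(v)` is concave
on `D`. Hence `r`, an infimum of concave functions bounded below by `0`, is concave, and a concave
function on an open convex subset of a finite-dimensional space is continuous.
-/

open Bornology
open scoped Pointwise

section LineParams

variable {E : Type*}

section Module

variable [AddCommGroup E] [Module ℝ E]

def lineParams (D : Set E) (p v : E) : Set ℝ :=
  {t : ℝ | p + t • v ∈ D}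

theorem Convex.lineParams {D : Set E} (hD : Convex ℝ D) (p v : E) :
    Convex ℝ (lineParams D p v) :=
  have hpre : _root_.lineParams D p v = AffineMap.lineMap p (p + v) ⁻¹' D := by
    ext t
    simp [_root_.lineParams, AffineMap.lineMap_apply, add_comm]
  hpre ▸ hD.affine_preimage _

theorem lineParams_smul_add_smul_subset {D : Set E} (hD : Convex ℝ D) {p q : E} (v : E)
    {a b : ℝ} (ha : 0 ≤ a) (hb : 0 ≤ b) (hab : a + b = 1) :
    a • lineParams D p v + b • lineParams D q v ⊆ lineParams D (a • p + b • q) v := by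
  rintro _ ⟨_, ⟨s, hs, rfl⟩, _, ⟨t, ht, rfl⟩, rfl⟩
  have key : a • p + b • q + (a • s + b • t) • v = a • (p + s • v) + b • (q + t • v) := by
    simp only [smul_eq_mul, smul_add, add_smul, smul_smul]
    abel
  show _ ∈ D
  rw [key]
  exact hD hs ht ha hb hab

end Module

variable [NormedAddCommGroup E] [NormedSpace ℝ E]

theorem antilipschitzWith_add_smul (p : E) {v : E} (hv : v ≠ 0) :
    AntilipschitzWith ‖v‖₊⁻¹ (fun t : ℝ => p + t • v) :=
  AntilipschitzWith.of_le_mul_dist fun s t => by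
    rw [dist_add_left, dist_eq_norm (s • v), ← sub_smul, norm_smul, NNReal.coe_inv, coe_nnnorm,
      mul_left_comm, inv_mul_cancel₀ (norm_ne_zero_iff.mpr hv), mul_one, dist_eq_norm]

theorem Bornology.IsBounded.lineParams {D : Set E} (hD : IsBounded D) (p : E) {v : E}
    (hv : v ≠ 0) : IsBounded (lineParams D p v) :=
  (antilipschitzWith_add_smul p hv).isBounded_preimage hD

end LineParams

theorem Set.OrdConnected.volume_eq_ediam {s : Set ℝ} (hs : s.OrdConnected) (hb : IsBounded s) :
    volume s = ediam s := by
  refine le_antisymm (Real.volume_le_diam s) ?_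
  have hIoo : Set.Ioo (sInf s) (sSup s) ⊆ s := by
    rcases s.eq_empty_or_nonempty with rfl | hne
    · simp
    · exact IsConnected.Ioo_csInf_csSup_subset ⟨hne, hs.isPreconnected⟩ hb.bddBelow hb.bddAbove
  rw [Real.ediam_eq hb, ← Real.volume_Ioo]
  exact measure_mono hIoo

theorem Real.diam_add {s t : Set ℝ} (hs : IsBounded s) (ht : IsBounded t) (hs₀ : s.Nonempty)
    (ht₀ : t.Nonempty) : diam (s + t) = diam s + diam t := by
  rw [Real.diam_eq hs, Real.diam_eq ht, Real.diam_eq (hs.add ht),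
    csSup_add hs₀ hs.bddAbove ht₀ ht.bddAbove, csInf_add hs₀ hs.bddBelow ht₀ ht.bddBelow]
  ring

theorem Real.diam_smul_add_smul {s t : Set ℝ} (hs : IsBounded s) (ht : IsBounded t)
    (hs₀ : s.Nonempty) (ht₀ : t.Nonempty) {a b : ℝ} (ha : 0 ≤ a) (hb : 0 ≤ b) :
    diam (a • s + b • t) = a * diam s + b * diam t := by
  rw [Real.diam_add (hs.smul₀ a) (ht.smul₀ b) (hs₀.smul_set) (ht₀.smul_set), diam_smul₀,
    diam_smul₀, Real.norm_of_nonneg ha, Real.norm_of_nonneg hb]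

theorem concaveOn_sInf_image {E ι : Type*} [AddCommGroup E] [Module ℝ E] {s : Set E}
    {I : Set ι} {f : ι → E → ℝ} (hs : Convex ℝ s) (hf : ∀ i ∈ I, ConcaveOn ℝ s (f i))
    (hbdd : ∀ x ∈ s, BddBelow ((f · x) '' I)) :
    ConcaveOn ℝ s (fun x => sInf ((f · x) '' I)) := by
  refine ⟨hs, fun x hx y hy a b ha hb hab => ?_⟩
  rcases I.eq_empty_or_nonempty with rfl | hI
  · simp -- `sInf ∅ = 0` in `ℝ`
  refine le_csInf (hI.image _) ?_
  rintro _ ⟨i, hi, rfl⟩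
  calc a • sInf ((f · x) '' I) + b • sInf ((f · y) '' I) ≤ a • f i x + b • f i y := by
        gcongr
        · exact csInf_le (hbdd x hx) (Set.mem_image_of_mem _ hi)
        · exact csInf_le (hbdd y hy) (Set.mem_image_of_mem _ hi)
    _ ≤ f i (a • x + b • y) := (hf i hi).2 hx hy ha hb hab

section SegLen

variable {n : ℕ} {D : Set (EuclideanSpace ℝ (Fin n))}

theorem segLen_nonneg (p v : EuclideanSpace ℝ (Fin n)) : 0 ≤ segLen D p v :=
  ENNReal.toReal_nonneg

theorem segLen_eq_diam (hConv : Convex ℝ D) (hBdd : IsBounded D) {p v : EuclideanSpace ℝ (Fin n)}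
    (hp : p ∈ D) (hv : v ≠ 0) : segLen D p v = diam (lineParams D p v) := by
  have h₀ : (0 : ℝ) ∈ lineParams D p v := by simpa [lineParams] using hp
  have hcomp := (hConv.lineParams p v).isPreconnected.connectedComponentIn h₀
  rw [segLen, ← lineParams, hcomp,
    (hConv.lineParams p v).ordConnected.volume_eq_ediam (hBdd.lineParams p hv), Metric.diam]

theorem concaveOn_segLen (hConv : Convex ℝ D) (hBdd : IsBounded D)
    {v : EuclideanSpace ℝ (Fin n)} (hv : v ≠ 0) : ConcaveOn ℝ D (segLen D · v) := by
  refine ⟨hConv, fun p hp q hq a b ha hb hab => ?_⟩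
  have hne : ∀ x ∈ D, (lineParams D x v).Nonempty := fun x hx =>
    ⟨0, by simpa [lineParams] using hx⟩
  have hc := hConv hp hq ha hb hab
  simp only [smul_eq_mul]
  rw [segLen_eq_diam hConv hBdd hp hv, segLen_eq_diam hConv hBdd hq hv,
    segLen_eq_diam hConv hBdd hc hv, ← Real.diam_smul_add_smul (hBdd.lineParams p hv)
    (hBdd.lineParams q hv) (hne p hp) (hne q hq) ha hb]
  exact diam_mono (lineParams_smul_add_smul_subset hConv v ha hb hab) (hBdd.lineParams _ hv)

end SegLen

theorem continuousOn_inacc_of_convex_general {n : ℕ} (D : Set (EuclideanSpace ℝ (Fin n)))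
    (hOpen : IsOpen D) (hBdd : Bornology.IsBounded D)
    (hConv : Convex ℝ D) :
    ContinuousOn (inacc D) D := by
  refine ConcaveOn.continuousOn hOpen (concaveOn_sInf_image hConv (fun v hv => ?_) fun p _ => ?_)
  · exact concaveOn_segLen hConv hBdd (ne_zero_of_mem_unit_sphere ⟨v, hv⟩)
  · exact ⟨0, Set.forall_mem_image.mpr fun v _ => segLen_nonneg p v⟩

/-- for a bounded *convex* domain `D ⊂ ℝⁿ`, the inaccessibility function
`r(p) = min_v f_p(v)` is continuous on `D`. -/
theorem continuousOn_inacc_of_convex {n : ℕ} (D : Set (EuclideanSpace ℝ (Fin n)))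
    (hOpen : IsOpen D) (hNe : D.Nonempty) (hBdd : Bornology.IsBounded D)
    (hConv : Convex ℝ D) :
    ContinuousOn (inacc D) D :=
  continuousOn_inacc_of_convex_general D hOpen hBdd hConv
end

section
/- Let D ⊂ ℝⁿ be a bounded convex domain, p ∈ D, r = r(p), and let [P,Q] be a segment of length r with P, Q ∈ ∂D and p ∈ [P,Q]. Let v_P and v_Q be supporting unit vectors at P and Q respectively, and suppose v_P and v_Q are not parallel. Then Q − P lies in the plane π spanned by v_P and v_Q; there exists a unit vector v ∈ π orthogonal to Q − P such that E_r ⊆ {x ∈ ℝⁿ : ⟨x − p, v⟩ ≤ 0}; and every point x ∈ [P,Q] \ {p} sufficiently close to p satisfies r(x) < r. -/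
/-!
Both supporting half-spaces contain `D`, so in a direction `w` with `⟪w, vP⟫ < 0 < ⟪w, vQ⟫` the
chord of `D` through `x` is no longer than the chord of the wedge they bound, an explicit
function of `(x, w)` that is affine in `x`. At `p` the direction `Q - P` realises `r`, so it
minimises the wedge chord rescaled by `‖w‖`. Projecting `Q - P` onto `span {vP, vQ}` keeps the
wedge chord and shortens the vector, so `Q - P` already lies in the plane. Affinity in `x` turns
`r(x) ≥ r` into a half-space condition. Finally, the first-order condition of the minimum, for
`Q - P` rotated towards the normal of that half-space,
changes by a nonzero multiple of `t` when `p` moves to `p + t (Q - P)`: it cannot hold at both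
points, so `r(p + t (Q - P)) < r` for small `t ≠ 0`.
-/

open scoped RealInnerProductSpace
open Metric MeasureTheory

/-- `E_r`: the closure of the set of points of `D` with inaccessibility at least `r`. -/
noncomputable def Eset {n : ℕ} (D : Set (EuclideanSpace ℝ (Fin n))) (r : ℝ) :
    Set (EuclideanSpace ℝ (Fin n)) :=
  closure {p | p ∈ D ∧ r ≤ inacc D p}

/-- `v` is a supporting (unit) vector of `D` at the boundary point `p`: `v` is a unit
vector and `p` lies on the supporting hyperplane `H_v = {x | ⟪x,v⟫ = sup_{y ∈ D} ⟪y,v⟫}`. -/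
def IsSupportVec {n : ℕ} (D : Set (EuclideanSpace ℝ (Fin n)))
    (v p : EuclideanSpace ℝ (Fin n)) : Prop :=
  ‖v‖ = 1 ∧ ⟪p, v⟫ = sSup ((fun y : EuclideanSpace ℝ (Fin n) => ⟪y, v⟫) '' D)

open Topology

section Wedge

variable {E : Type*} [NormedAddCommGroup E] [InnerProductSpace ℝ E]

def halfSpace (Q v : E) : Set E := {y | ⟪y - Q, v⟫ ≤ 0}

theorem isClosed_halfSpace (Q v : E) : IsClosed (halfSpace Q v) :=
  isClosed_le (by fun_prop) continuous_const

theorem inner_sub_neg_of_subset_halfSpace {D : Set E} {Q v x : E} (hD : IsOpen D)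
    (hDQ : D ⊆ halfSpace Q v) (hv : v ≠ 0) (hx : x ∈ D) : ⟪x - Q, v⟫ < 0 := by
  have hnhds : ∀ᶠ t in 𝓝[>] (0 : ℝ), x + t • v ∈ D :=
    nhdsWithin_le_nhds <| (by fun_prop : Continuous fun t : ℝ => x + t • v).continuousAt
      |>.preimage_mem_nhds (by simpa using hD.mem_nhds hx)
  obtain ⟨t, htD, ht⟩ := (hnhds.and self_mem_nhdsWithin).exists
  have := hDQ htD
  simp only [halfSpace, Set.mem_ofPred_eq, add_sub_right_comm, inner_add_left,
    real_inner_smul_left, real_inner_self_eq_norm_sq] at this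
  have : 0 < ‖v‖ := norm_pos_iff.mpr hv
  nlinarith [mul_pos ht (pow_pos this 2)]

theorem inner_sub_neg_of_mem_segment {D : Set E} {P Q v p : E} (hD : IsOpen D)
    (hDP : D ⊆ halfSpace P v) (hv : v ≠ 0) (hp : p ∈ D) (hseg : p ∈ segment ℝ P Q) :
    ⟪Q - P, v⟫ < 0 := by
  obtain ⟨μ, ⟨hμ, -⟩, rfl⟩ := (segment_eq_image' ℝ P Q).subset hseg
  have := inner_sub_neg_of_subset_halfSpace hD hDP hv hp
  rw [add_sub_cancel_left, real_inner_smul_left] at this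
  exact neg_of_mul_neg_right this hμ

/-- `x + hitTime Q v x w • w` is the point where the line through `x` in direction `w` meets
the hyperplane through `Q` orthogonal to `v`. -/
noncomputable def hitTime (Q v x w : E) : ℝ := ⟪Q - x, v⟫ / ⟪w, v⟫

variable {P Q vP vQ v x w e : E}

theorem inner_add_smul_sub (t : ℝ) : ⟪x + t • w - Q, v⟫ = t * ⟪w, v⟫ - ⟪Q - x, v⟫ := by
  rw [show x + t • w - Q = t • w - (Q - x) by abel, inner_sub_left, real_inner_smul_left]

theorem add_smul_mem_halfSpace_iff_le_hitTime (hw : 0 < ⟪w, v⟫) {t : ℝ} :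
    x + t • w ∈ halfSpace Q v ↔ t ≤ hitTime Q v x w := by
  rw [hitTime, le_div_iff₀ hw, halfSpace, Set.mem_ofPred_eq, inner_add_smul_sub, sub_nonpos]

theorem add_smul_mem_halfSpace_iff_hitTime_le (hw : ⟪w, v⟫ < 0) {t : ℝ} :
    x + t • w ∈ halfSpace Q v ↔ hitTime Q v x w ≤ t := by
  rw [hitTime, div_le_iff_of_neg hw, halfSpace, Set.mem_ofPred_eq, inner_add_smul_sub,
    sub_nonpos]

theorem hitTime_eq_sub (x y : E) :
    hitTime Q v x w = hitTime Q v y w - ⟪x - y, v⟫ / ⟪w, v⟫ := by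
  rw [hitTime, hitTime, ← sub_div, ← inner_sub_left, sub_sub_sub_cancel_right]

theorem hitTime_add_smul (hw : ⟪w, v⟫ ≠ 0) (t : ℝ) :
    hitTime Q v (x + t • w) w = hitTime Q v x w - t := by
  rw [hitTime_eq_sub _ x, add_sub_cancel_left, real_inner_smul_left, mul_div_cancel_right₀ _ hw]

theorem hitTime_smul (c : ℝ) : hitTime Q v x (c • w) = c⁻¹ * hitTime Q v x w := by
  rw [hitTime, hitTime, real_inner_smul_left, div_mul_eq_div_div_swap, div_eq_inv_mul _ c]

theorem hasDerivAt_hitTime {W : ℝ → E} {θ : ℝ} (hW : HasDerivAt W e θ) (hv : ⟪W θ, v⟫ ≠ 0) :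
    HasDerivAt (fun θ => hitTime Q v x (W θ))
      (-(hitTime Q v x (W θ) * (⟪e, v⟫ / ⟪W θ, v⟫))) θ := by
  have h := (hasDerivAt_const θ ⟪Q - x, v⟫).fun_div (hW.inner ℝ (hasDerivAt_const θ v)) hv
  rw [inner_zero_right, zero_add] at h
  refine h.congr_deriv ?_
  simp only [hitTime]
  field_simp
  ring

theorem hasDerivAt_cos_smul_add_sin_smul (a b : E) (θ : ℝ) :
    HasDerivAt (fun θ => Real.cos θ • a + Real.sin θ • b) (-Real.sin θ • a + Real.cos θ • b) θ :=
  ((Real.hasDerivAt_cos θ).smul_const a).add ((Real.hasDerivAt_sin θ).smul_const b)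

theorem norm_cos_smul_add_sin_smul {a b : E} (hab : ⟪a, b⟫ = 0) (hb : ‖b‖ = ‖a‖) (θ : ℝ) :
    ‖Real.cos θ • a + Real.sin θ • b‖ = ‖a‖ := by
  rw [← sq_eq_sq₀ (norm_nonneg _) (norm_nonneg _), norm_add_sq_real, norm_smul, norm_smul,
    real_inner_smul_left, real_inner_smul_right, hab, hb, Real.norm_eq_abs, Real.norm_eq_abs]
  nlinarith [Real.sin_sq_add_cos_sq θ, sq_abs (Real.sin θ), sq_abs (Real.cos θ)]

/-- Length of the chord cut by the wedge `halfSpace P vP ∩ halfSpace Q vQ` on the line through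
`x` in direction `w`, when `⟪w, vP⟫ < 0 < ⟪w, vQ⟫`. -/
noncomputable def wedgeChord (P Q vP vQ x w : E) : ℝ := hitTime Q vQ x w - hitTime P vP x w

noncomputable def wedgeNormal (vP vQ w : E) : E := ⟪w, vQ⟫⁻¹ • vQ - ⟪w, vP⟫⁻¹ • vP

theorem inner_wedgeNormal (e : E) :
    ⟪e, wedgeNormal vP vQ w⟫ = ⟪e, vQ⟫ / ⟪w, vQ⟫ - ⟪e, vP⟫ / ⟪w, vP⟫ := by
  rw [wedgeNormal, inner_sub_right, real_inner_smul_right, real_inner_smul_right, div_eq_inv_mul,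
    div_eq_inv_mul]

theorem inner_self_wedgeNormal (hwQ : ⟪w, vQ⟫ ≠ 0) (hwP : ⟪w, vP⟫ ≠ 0) :
    ⟪w, wedgeNormal vP vQ w⟫ = 0 := by
  rw [inner_wedgeNormal, div_self hwQ, div_self hwP, sub_self]

theorem wedgeNormal_mem_span : wedgeNormal vP vQ w ∈ Submodule.span ℝ {vP, vQ} :=
  Submodule.sub_mem _ (Submodule.smul_mem _ _ (Submodule.subset_span (by simp)))
    (Submodule.smul_mem _ _ (Submodule.subset_span (by simp)))

theorem wedgeNormal_ne_zero (hvP : ‖vP‖ = 1) (hvQ : ‖vQ‖ = 1) (hne : vP ≠ -vQ)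
    (hwQ : 0 < ⟪w, vQ⟫) (hwP : ⟪w, vP⟫ < 0) : wedgeNormal vP vQ w ≠ 0 := by
  intro h
  have heq : ⟪w, vQ⟫⁻¹ • vQ = ⟪w, vP⟫⁻¹ • vP := sub_eq_zero.mp h
  have hcoef : ⟪w, vP⟫⁻¹ = -⟪w, vQ⟫⁻¹ := by
    have := congrArg norm heq
    rw [norm_smul, norm_smul, hvP, hvQ, Real.norm_eq_abs, Real.norm_eq_abs, abs_inv, abs_inv,
      abs_of_pos hwQ, abs_of_neg hwP, mul_one, mul_one, inv_neg] at this
    linarith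
  apply hne
  rw [hcoef, neg_smul] at heq
  have := congrArg (⟪w, vQ⟫ • ·) heq
  simp only [smul_neg, smul_smul, mul_inv_cancel₀ hwQ.ne', one_smul] at this
  rw [this, neg_neg]

theorem wedgeChord_eq_sub_inner (x y : E) :
    wedgeChord P Q vP vQ x w = wedgeChord P Q vP vQ y w - ⟪x - y, wedgeNormal vP vQ w⟫ := by
  rw [wedgeChord, wedgeChord, hitTime_eq_sub x y, hitTime_eq_sub (Q := P) x y, inner_wedgeNormal]
  ring

theorem wedgeChord_add_smul (hwQ : ⟪w, vQ⟫ ≠ 0) (hwP : ⟪w, vP⟫ ≠ 0) (t : ℝ) :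
    wedgeChord P Q vP vQ (x + t • w) w = wedgeChord P Q vP vQ x w := by
  rw [wedgeChord, wedgeChord, hitTime_add_smul hwQ, hitTime_add_smul hwP, sub_sub_sub_cancel_right]

theorem wedgeChord_add_smul_sub (hQ : ⟪Q - P, vQ⟫ ≠ 0) (hP : ⟪Q - P, vP⟫ ≠ 0) (μ : ℝ) :
    wedgeChord P Q vP vQ (P + μ • (Q - P)) (Q - P) = 1 := by
  rw [wedgeChord_add_smul hQ hP, wedgeChord, hitTime, hitTime, sub_self, inner_zero_left, zero_div,
    sub_zero, div_self hQ]

theorem wedgeChord_smul (c : ℝ) :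
    wedgeChord P Q vP vQ x (c • w) = c⁻¹ * wedgeChord P Q vP vQ x w := by
  rw [wedgeChord, wedgeChord, hitTime_smul, hitTime_smul, mul_sub]

end Wedge

section Inaccessibility

variable {n : ℕ} {D : Set (EuclideanSpace ℝ (Fin n))} {P Q v vP vQ x w e : EuclideanSpace ℝ (Fin n)}

theorem IsSupportVec.subset_halfSpace (hD : Bornology.IsBounded D) (h : IsSupportVec D v Q) :
    D ⊆ halfSpace Q v := by
  obtain ⟨R, hR⟩ := hD.exists_norm_le
  have hbdd : BddAbove ((fun y => ⟪y, v⟫) '' D) :=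
    ⟨R * ‖v‖, by
      rintro _ ⟨y, hy, rfl⟩
      exact (real_inner_le_norm y v).trans (mul_le_mul_of_nonneg_right (hR y hy) (norm_nonneg v))⟩
  intro y hy
  rw [halfSpace, Set.mem_ofPred_eq, inner_sub_left, sub_nonpos, h.2]
  exact le_csSup hbdd ⟨y, hy, rfl⟩

theorem segLen_le_wedgeChord (hx : x ∈ D) (hDP : D ⊆ halfSpace P vP) (hDQ : D ⊆ halfSpace Q vQ)
    (hwQ : 0 < ⟪w, vQ⟫) (hwP : ⟪w, vP⟫ < 0) : segLen D x w ≤ wedgeChord P Q vP vQ x w := by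
  have hsub : connectedComponentIn {t : ℝ | x + t • w ∈ D} 0 ⊆
      Set.Icc (hitTime P vP x w) (hitTime Q vQ x w) :=
    (connectedComponentIn_subset _ _).trans fun t ht =>
      ⟨(add_smul_mem_halfSpace_iff_hitTime_le hwP).mp (hDP ht),
        (add_smul_mem_halfSpace_iff_le_hitTime hwQ).mp (hDQ ht)⟩
  have h0 := hsub (mem_connectedComponentIn (by simpa using hx))
  calc segLen D x w = volume.real (connectedComponentIn {t : ℝ | x + t • w ∈ D} 0) := rfl
    _ ≤ volume.real (Set.Icc (hitTime P vP x w) (hitTime Q vQ x w)) :=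
      measureReal_mono hsub measure_Icc_lt_top.ne
    _ = wedgeChord P Q vP vQ x w := Real.volume_real_Icc_of_le (h0.1.trans h0.2)

theorem inacc_le_segLen (x : EuclideanSpace ℝ (Fin n)) (hw : ‖w‖ = 1) :
    inacc D x ≤ segLen D x w := by
  refine csInf_le ⟨0, ?_⟩ ⟨w, by simpa using hw, rfl⟩
  rintro _ ⟨v, -, rfl⟩
  exact ENNReal.toReal_nonneg

theorem inacc_le_norm_mul_wedgeChord (hx : x ∈ D) (hDP : D ⊆ halfSpace P vP)
    (hDQ : D ⊆ halfSpace Q vQ) (hwQ : 0 < ⟪w, vQ⟫) (hwP : ⟪w, vP⟫ < 0) :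
    inacc D x ≤ ‖w‖ * wedgeChord P Q vP vQ x w := by
  have hw₀ : w ≠ 0 := by rintro rfl; simp at hwQ
  have hw : 0 < ‖w‖ := norm_pos_iff.mpr hw₀
  calc inacc D x ≤ segLen D x (‖w‖⁻¹ • w) := inacc_le_segLen x (norm_smul_inv_norm hw₀)
    _ ≤ wedgeChord P Q vP vQ x (‖w‖⁻¹ • w) := by
      refine segLen_le_wedgeChord hx hDP hDQ ?_ ?_ <;> rw [real_inner_smul_left]
      · positivity
      · exact mul_neg_of_pos_of_neg (inv_pos.mpr hw) hwP
    _ = ‖w‖ * wedgeChord P Q vP vQ x w := by rw [wedgeChord_smul, inv_inv]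

theorem wedgeChord_pos (hD : IsOpen D) (hx : x ∈ D) (hDP : D ⊆ halfSpace P vP)
    (hDQ : D ⊆ halfSpace Q vQ) (hwQ : 0 < ⟪w, vQ⟫) (hwP : ⟪w, vP⟫ < 0) :
    0 < wedgeChord P Q vP vQ x w := by
  have hvQ : vQ ≠ 0 := by rintro rfl; simp at hwQ
  have hQ : 0 < hitTime Q vQ x w := by
    refine div_pos ?_ hwQ
    rw [← neg_sub, inner_neg_left, neg_pos]
    exact inner_sub_neg_of_subset_halfSpace hD hDQ hvQ hx
  have hP : hitTime P vP x w ≤ 0 :=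
    (add_smul_mem_halfSpace_iff_hitTime_le hwP).mp (by simpa using hDP hx)
  rw [wedgeChord]
  linarith

theorem mem_span_of_norm_mul_wedgeChord_le_inacc (hD : IsOpen D) (hx : x ∈ D)
    (hDP : D ⊆ halfSpace P vP) (hDQ : D ⊆ halfSpace Q vQ) (hwQ : 0 < ⟪w, vQ⟫) (hwP : ⟪w, vP⟫ < 0)
    (h : ‖w‖ * wedgeChord P Q vP vQ x w ≤ inacc D x) : w ∈ Submodule.span ℝ {vP, vQ} := by
  set K := Submodule.span ℝ {vP, vQ}
  have hproj : ∀ v ∈ K, ⟪K.starProjection w, v⟫ = ⟪w, v⟫ := fun v hv => by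
    have := K.starProjection_inner_eq_zero w v hv
    rwa [inner_sub_left, sub_eq_zero, eq_comm] at this
  have hQ := hproj vQ (Submodule.subset_span (by simp))
  have hP := hproj vP (Submodule.subset_span (by simp))
  have hchord : wedgeChord P Q vP vQ x (K.starProjection w) = wedgeChord P Q vP vQ x w := by
    simp only [wedgeChord, hitTime, hQ, hP]
  have hle : ‖w‖ ≤ ‖K.starProjection w‖ := by
    refine le_of_mul_le_mul_right ?_ (wedgeChord_pos hD hx hDP hDQ hwQ hwP)
    exact h.trans ((inacc_le_norm_mul_wedgeChord hx hDP hDQ (hQ ▸ hwQ) (hP ▸ hwP)).trans_eq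
      (by rw [hchord]))
  exact (K.mem_iff_norm_starProjection w).mpr (le_antisymm (K.norm_starProjection_apply_le w) hle)

theorem Eset_norm_mul_wedgeChord_subset (y : EuclideanSpace ℝ (Fin n)) (hDP : D ⊆ halfSpace P vP)
    (hDQ : D ⊆ halfSpace Q vQ) (hwQ : 0 < ⟪w, vQ⟫) (hwP : ⟪w, vP⟫ < 0) :
    Eset D (‖w‖ * wedgeChord P Q vP vQ y w) ⊆ halfSpace y (wedgeNormal vP vQ w) := by
  refine closure_minimal (fun x ⟨hx, hxr⟩ => ?_) (isClosed_halfSpace _ _)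
  have hw : 0 < ‖w‖ := norm_pos_iff.mpr (by rintro rfl; simp at hwQ)
  have := hxr.trans (inacc_le_norm_mul_wedgeChord hx hDP hDQ hwQ hwP)
  rw [wedgeChord_eq_sub_inner x y] at this
  have := le_of_mul_le_mul_left this hw
  show ⟪x - y, wedgeNormal vP vQ w⟫ ≤ 0
  linarith

/-- First-order condition: turning `w` towards an orthogonal `e` cannot push the (rescaled) chord
below `inacc D x`. -/
theorem hitTime_mul_inner_div_eq (hx : x ∈ D) (hDP : D ⊆ halfSpace P vP)
    (hDQ : D ⊆ halfSpace Q vQ) (hwQ : 0 < ⟪w, vQ⟫) (hwP : ⟪w, vP⟫ < 0) (hwe : ⟪w, e⟫ = 0)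
    (he : ‖e‖ = ‖w‖) (h : ‖w‖ * wedgeChord P Q vP vQ x w ≤ inacc D x) :
    hitTime Q vQ x w * (⟪e, vQ⟫ / ⟪w, vQ⟫) = hitTime P vP x w * (⟪e, vP⟫ / ⟪w, vP⟫) := by
  set W : ℝ → EuclideanSpace ℝ (Fin n) := fun θ => Real.cos θ • w + Real.sin θ • e
  have hW0 : W 0 = w := by simp [W]
  have hW : HasDerivAt W e 0 := by simpa using hasDerivAt_cos_smul_add_sin_smul w e 0
  have hderiv : HasDerivAt (fun θ => ‖w‖ * wedgeChord P Q vP vQ x (W θ))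
      (‖w‖ * (-(hitTime Q vQ x w * (⟪e, vQ⟫ / ⟪w, vQ⟫)) -
        -(hitTime P vP x w * (⟪e, vP⟫ / ⟪w, vP⟫)))) 0 := by
    have hQ := hasDerivAt_hitTime (Q := Q) (x := x) hW (hW0 ▸ hwQ.ne')
    have hP := hasDerivAt_hitTime (Q := P) (x := x) hW (hW0 ▸ hwP.ne)
    rw [hW0] at hQ hP
    exact (hQ.sub hP).const_mul ‖w‖
  have hmin : IsLocalMin (fun θ => ‖w‖ * wedgeChord P Q vP vQ x (W θ)) 0 := by
    have hcont : ContinuousAt W 0 := hW.continuousAt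
    have hQ : ∀ᶠ θ in 𝓝 0, 0 < ⟪W θ, vQ⟫ :=
      (hcont.inner continuousAt_const).eventually (lt_mem_nhds (by simpa [hW0] using hwQ))
    have hP : ∀ᶠ θ in 𝓝 0, ⟪W θ, vP⟫ < 0 :=
      (hcont.inner continuousAt_const).eventually (gt_mem_nhds (by simpa [hW0] using hwP))
    filter_upwards [hQ, hP] with θ hθQ hθP
    calc ‖w‖ * wedgeChord P Q vP vQ x (W 0) ≤ inacc D x := hW0 ▸ h
      _ ≤ ‖W θ‖ * wedgeChord P Q vP vQ x (W θ) :=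
        inacc_le_norm_mul_wedgeChord hx hDP hDQ hθQ hθP
      _ = ‖w‖ * wedgeChord P Q vP vQ x (W θ) := by rw [norm_cos_smul_add_sin_smul hwe he]
  have hw : ‖w‖ ≠ 0 := norm_ne_zero_iff.mpr (by rintro rfl; simp at hwQ)
  have := hmin.hasDerivAt_eq_zero hderiv
  rw [mul_eq_zero, or_iff_right hw] at this
  linarith

theorem inacc_add_smul_lt (hx : x ∈ D) {t : ℝ} (hxt : x + t • w ∈ D) (ht : t ≠ 0)
    (hDP : D ⊆ halfSpace P vP) (hDQ : D ⊆ halfSpace Q vQ) (hwQ : 0 < ⟪w, vQ⟫) (hwP : ⟪w, vP⟫ < 0)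
    (hu : wedgeNormal vP vQ w ≠ 0) (h : ‖w‖ * wedgeChord P Q vP vQ x w ≤ inacc D x) :
    inacc D (x + t • w) < ‖w‖ * wedgeChord P Q vP vQ x w := by
  by_contra! hxt'
  set u := wedgeNormal vP vQ w
  have hw : w ≠ 0 := by rintro rfl; simp at hwQ
  set e := (‖w‖ / ‖u‖) • u
  have hwe : ⟪w, e⟫ = 0 := by
    rw [real_inner_smul_right, inner_self_wedgeNormal hwQ.ne' hwP.ne, mul_zero]
  have he : ‖e‖ = ‖w‖ := by
    rw [norm_smul, norm_div, norm_norm, norm_norm, div_mul_cancel₀ _ (norm_ne_zero_iff.mpr hu)]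
  have heu : ⟪e, vQ⟫ / ⟪w, vQ⟫ - ⟪e, vP⟫ / ⟪w, vP⟫ = ‖w‖ * ‖u‖ := by
    rw [← inner_wedgeNormal, real_inner_smul_left, real_inner_self_eq_norm_sq]
    field_simp [norm_ne_zero_iff.mpr hu]
  have h₀ := hitTime_mul_inner_div_eq hx hDP hDQ hwQ hwP hwe he h
  have h₁ := hitTime_mul_inner_div_eq hxt hDP hDQ hwQ hwP hwe he
    (by rwa [wedgeChord_add_smul hwQ.ne' hwP.ne])
  rw [hitTime_add_smul hwQ.ne', hitTime_add_smul hwP.ne] at h₁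
  have : t * (‖w‖ * ‖u‖) = 0 := by
    rw [← heu]
    linear_combination h₀ - h₁
  simp [ht, hw, hu] at this

end Inaccessibility

theorem nonparallel_support_case_general {n : ℕ} (D : Set (EuclideanSpace ℝ (Fin n)))
    (hOpen : IsOpen D) (hBdd : Bornology.IsBounded D)
    (p : EuclideanSpace ℝ (Fin n)) (hp : p ∈ D)
    (P Q : EuclideanSpace ℝ (Fin n))
    (hlen : dist P Q = inacc D p) (hseg : p ∈ segment ℝ P Q)
    (vP vQ : EuclideanSpace ℝ (Fin n))
    (hvP : IsSupportVec D vP P) (hvQ : IsSupportVec D vQ Q)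
    (hpar : ¬ (vP = vQ ∨ vP = -vQ)) :
    Q - P ∈ Submodule.span ℝ ({vP, vQ} : Set (EuclideanSpace ℝ (Fin n))) ∧
    (∃ v : EuclideanSpace ℝ (Fin n), ‖v‖ = 1 ∧
      v ∈ Submodule.span ℝ ({vP, vQ} : Set (EuclideanSpace ℝ (Fin n))) ∧
      ⟪v, Q - P⟫ = 0 ∧
      Eset D (inacc D p) ⊆ {x | ⟪x - p, v⟫ ≤ 0}) ∧
    (∃ ε > 0, ∀ x ∈ segment ℝ P Q, x ≠ p → dist x p < ε → inacc D x < inacc D p) := by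
  have hDP := hvP.subset_halfSpace hBdd
  have hDQ := hvQ.subset_halfSpace hBdd
  have hwP := inner_sub_neg_of_mem_segment hOpen hDP (norm_ne_zero_iff.mp (by simp [hvP.1])) hp hseg
  have hwQ : 0 < ⟪Q - P, vQ⟫ := by
    have := inner_sub_neg_of_mem_segment hOpen hDQ (norm_ne_zero_iff.mp (by simp [hvQ.1])) hp
      (segment_symm ℝ P Q ▸ hseg)
    rwa [← neg_sub, inner_neg_left, neg_neg_iff_pos] at this
  obtain ⟨μ, -, hμ : P + μ • (Q - P) = p⟩ := (segment_eq_image' ℝ P Q).subset hseg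
  have hr : ‖Q - P‖ * wedgeChord P Q vP vQ p (Q - P) = inacc D p := by
    rw [← hμ, wedgeChord_add_smul_sub hwQ.ne' hwP.ne, mul_one, hμ, ← hlen, dist_comm, dist_eq_norm]
  set u := wedgeNormal vP vQ (Q - P)
  have hu : u ≠ 0 := wedgeNormal_ne_zero hvP.1 hvQ.1 (fun h => hpar (Or.inr h)) hwQ hwP
  refine ⟨mem_span_of_norm_mul_wedgeChord_le_inacc hOpen hp hDP hDQ hwQ hwP hr.le,
    ⟨‖u‖⁻¹ • u, norm_smul_inv_norm hu, Submodule.smul_mem _ _ wedgeNormal_mem_span, ?_, ?_⟩, ?_⟩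
  · rw [real_inner_smul_left, real_inner_comm, inner_self_wedgeNormal hwQ.ne' hwP.ne, mul_zero]
  · intro x hx
    have hxu : ⟪x - p, u⟫ ≤ 0 := Eset_norm_mul_wedgeChord_subset p hDP hDQ hwQ hwP (hr ▸ hx)
    rw [Set.mem_ofPred_eq, real_inner_smul_right]
    exact mul_nonpos_of_nonneg_of_nonpos (by positivity) hxu
  · obtain ⟨ε, hε, hball⟩ := Metric.isOpen_iff.mp hOpen p hp
    refine ⟨ε, hε, fun x hx hxp hxε => ?_⟩
    obtain ⟨s, -, rfl : P + s • (Q - P) = x⟩ := (segment_eq_image' ℝ P Q).subset hx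
    rw [show P + s • (Q - P) = p + (s - μ) • (Q - P) by rw [← hμ]; module] at hxp hxε ⊢
    rw [← hr]
    refine inacc_add_smul_lt hp (hball hxε) (fun h => ?_) hDP hDQ hwQ hwP hu hr.le
    simp [h] at hxp

/-- Let `D ⊂ ℝⁿ` be a bounded convex domain, `p ∈ D`, `r = r(p)`, and
`[P,Q]` a segment of length `r` with `P, Q ∈ ∂D` and `p ∈ [P,Q]`; let `v_P, v_Q` be
supporting unit vectors at `P, Q`, and suppose they are not parallel. Then `Q - P`
lies in the plane `π` spanned by `v_P, v_Q`; there is a unit vector `v ∈ π` orthogonal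
to `Q - P` with `E_r ⊆ {x | ⟪x - p, v⟫ ≤ 0}`; and all points of `[P,Q] \ {p}`
sufficiently close to `p` have inaccessibility `< r`. -/
theorem nonparallel_support_case {n : ℕ} (D : Set (EuclideanSpace ℝ (Fin n)))
    (hOpen : IsOpen D) (hNe : D.Nonempty) (hBdd : Bornology.IsBounded D)
    (hConv : Convex ℝ D)
    (p : EuclideanSpace ℝ (Fin n)) (hp : p ∈ D)
    (P Q : EuclideanSpace ℝ (Fin n)) (hP : P ∈ frontier D) (hQ : Q ∈ frontier D)
    (hlen : dist P Q = inacc D p) (hseg : p ∈ segment ℝ P Q)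
    (vP vQ : EuclideanSpace ℝ (Fin n))
    (hvP : IsSupportVec D vP P) (hvQ : IsSupportVec D vQ Q)
    (hpar : ¬ (vP = vQ ∨ vP = -vQ)) :
    Q - P ∈ Submodule.span ℝ ({vP, vQ} : Set (EuclideanSpace ℝ (Fin n))) ∧
    (∃ v : EuclideanSpace ℝ (Fin n), ‖v‖ = 1 ∧
      v ∈ Submodule.span ℝ ({vP, vQ} : Set (EuclideanSpace ℝ (Fin n))) ∧
      ⟪v, Q - P⟫ = 0 ∧
      Eset D (inacc D p) ⊆ {x | ⟪x - p, v⟫ ≤ 0}) ∧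
    (∃ ε > 0, ∀ x ∈ segment ℝ P Q, x ≠ p → dist x p < ε → inacc D x < inacc D p) :=
  nonparallel_support_case_general D hOpen hBdd p hp P Q hlen hseg vP vQ hvP hvQ hpar
end

section
/- Let D ⊂ ℝⁿ be a bounded convex domain with R = max_{p ∈ D} r(p). For every r ∈ (0, R), the intersection of the topological boundary of D_r with D equals the level set {p ∈ D : r(p) = r}. -/
/-!
For a fixed direction `v ≠ 0`, the chord of `D` through `p` is parametrised by an interval of
length `sSup - sInf`, and convexity of `D` makes the interval at `a • p + b • q` contain the
Minkowski combination of the intervals at `p` and `q`. So `p ↦ segLen D p v` is concave on `D`,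
hence so is `inacc D`, an infimum of such functions, and it is continuous on the open set `D`.
Continuity gives `inacc D ≥ r` on the closure of `D_r` within `D`; conversely, if
`inacc D p = r < inacc D q`, concavity puts the open segment from `p` to `q` inside `D_r`, so `p`
lies in its closure.
-/

open scoped RealInnerProductSpace
open Metric MeasureTheory

/-- The inaccessibility `R` of `D`: the supremum (for convex `D`, the maximum) of the
inaccessibility function on `D`. -/
noncomputable def Rmax {n : ℕ} (D : Set (EuclideanSpace ℝ (Fin n))) : ℝ :=
  sSup (inacc D '' D)

open Bornology Set
open scoped Pointwise

theorem Real.volume_eq_of_isPreconnected {s : Set ℝ} (hs : IsPreconnected s)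
    (hb : IsBounded s) : volume s = ENNReal.ofReal (sSup s - sInf s) := by
  rcases s.eq_empty_or_nonempty with rfl | hne
  · simp
  refine le_antisymm ((Real.volume_le_diam s).trans_eq (Real.ediam_eq hb)) ?_
  rw [← Real.volume_Ioo]
  exact measure_mono (IsConnected.Ioo_csInf_csSup_subset ⟨hne, hs⟩ hb.bddBelow hb.bddAbove)

theorem smul_add_smul_length_le {A B M : Set ℝ} (hA : A.Nonempty) (hB : B.Nonempty)
    (hAb : IsBounded A) (hBb : IsBounded B) (hM : IsBounded M) {a b : ℝ} (ha : 0 ≤ a)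
    (hb : 0 ≤ b) (hABM : a • A + b • B ⊆ M) :
    a * (sSup A - sInf A) + b * (sSup B - sInf B) ≤ sSup M - sInf M := by
  have hne : (a • A + b • B).Nonempty := hA.smul_set.add hB.smul_set
  have hsup : sSup (a • A + b • B) = a * sSup A + b * sSup B := by
    rw [csSup_add hA.smul_set (hAb.bddAbove.smul_of_nonneg ha) hB.smul_set
      (hBb.bddAbove.smul_of_nonneg hb), Real.sSup_smul_of_nonneg ha,
      Real.sSup_smul_of_nonneg hb, smul_eq_mul, smul_eq_mul]
  have hinf : sInf (a • A + b • B) = a * sInf A + b * sInf B := by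
    rw [csInf_add hA.smul_set (hAb.bddBelow.smul_of_nonneg ha) hB.smul_set
      (hBb.bddBelow.smul_of_nonneg hb), Real.sInf_smul_of_nonneg ha,
      Real.sInf_smul_of_nonneg hb, smul_eq_mul, smul_eq_mul]
  have hsupM := csSup_le_csSup hM.bddAbove hne hABM
  have hinfM := csInf_le_csInf hM.bddBelow hne hABM
  linarith

section ConcaveSuperlevel

variable {E : Type*} [TopologicalSpace E] {s : Set E} {f : E → ℝ} {r : ℝ}

theorem ContinuousOn.closure_superlevel_inter_subset (hs : IsOpen s) (hf : ContinuousOn f s) :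
    closure {p | p ∈ s ∧ r < f p} ∩ s ⊆ {p | p ∈ s ∧ r ≤ f p} := by
  rintro p ⟨hcl, hp⟩
  have hfp := ((hf.continuousAt (hs.mem_nhds hp)).continuousWithinAt).mem_closure_image hcl
  refine ⟨hp, ?_⟩
  have hsub : f '' {p | p ∈ s ∧ r < f p} ⊆ Ioi r := image_subset_iff.2 fun _ hx => hx.2
  simpa only [closure_Ioi, mem_Ici] using closure_mono hsub hfp

variable [AddCommGroup E] [Module ℝ E] [ContinuousAdd E] [ContinuousSMul ℝ E]

theorem ConcaveOn.superlevel_subset_closure_strictSuperlevel (hf : ConcaveOn ℝ s f) {q : E}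
    (hq : q ∈ s) (hrq : r < f q) :
    {p | p ∈ s ∧ r ≤ f p} ⊆ closure {p | p ∈ s ∧ r < f p} := by
  rintro p ⟨hp, hrp⟩
  have hseg : openSegment ℝ p q ⊆ {p | p ∈ s ∧ r < f p} := by
    rintro _ ⟨a, b, ha, hb, hab, rfl⟩
    refine ⟨hf.1.openSegment_subset hp hq ⟨a, b, ha, hb, hab, rfl⟩, ?_⟩
    calc r = a * r + b * r := by rw [← add_mul, hab, one_mul]
      _ < a * f p + b * f q :=
        add_lt_add_of_le_of_lt (mul_le_mul_of_nonneg_left hrp ha.le)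
          (mul_lt_mul_of_pos_left hrq hb)
      _ ≤ f (a • p + b • q) := hf.2 hp hq ha.le hb.le hab
  exact closure_mono hseg (segment_subset_closure_openSegment (left_mem_segment ℝ p q))

theorem ConcaveOn.frontier_superlevel_inter (hf : ConcaveOn ℝ s f) (hs : IsOpen s)
    (hfc : ContinuousOn f s) {q : E} (hq : q ∈ s) (hrq : r < f q) :
    frontier {p | p ∈ s ∧ r < f p} ∩ s = {p | p ∈ s ∧ f p = r} := by
  have hopen : IsOpen {p | p ∈ s ∧ r < f p} := hfc.isOpen_inter_preimage hs isOpen_Ioi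
  rw [hopen.frontier_eq]
  ext p
  constructor
  · rintro ⟨⟨hcl, hnot⟩, hp⟩
    exact ⟨hp, le_antisymm (not_lt.1 fun h => hnot ⟨hp, h⟩)
      (hfc.closure_superlevel_inter_subset hs ⟨hcl, hp⟩).2⟩
  · rintro ⟨hp, rfl⟩
    exact ⟨⟨hf.superlevel_subset_closure_strictSuperlevel hq hrq ⟨hp, le_rfl⟩,
      fun h => lt_irrefl _ h.2⟩, hp⟩

end ConcaveSuperlevel

theorem ConcaveOn.sInf_image {E ι : Type*} [AddCommGroup E] [Module ℝ E] {s : Set E}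
    {S : Set ι} {f : ι → E → ℝ} (hs : Convex ℝ s) (hf : ∀ i ∈ S, ConcaveOn ℝ s (f i))
    (hbdd : ∀ x ∈ s, BddBelow ((f · x) '' S)) :
    ConcaveOn ℝ s (fun x => sInf ((f · x) '' S)) := by
  rcases S.eq_empty_or_nonempty with rfl | hS
  · simpa using concaveOn_const 0 hs
  refine ⟨hs, fun x hx y hy a b ha hb hab => le_csInf (hS.image _) ?_⟩
  rintro _ ⟨i, hi, rfl⟩
  calc a • sInf ((f · x) '' S) + b • sInf ((f · y) '' S) ≤ a • f i x + b • f i y := by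
        gcongr
        · exact csInf_le (hbdd x hx) ⟨i, hi, rfl⟩
        · exact csInf_le (hbdd y hy) ⟨i, hi, rfl⟩
    _ ≤ f i (a • x + b • y) := (hf i hi).2 hx hy ha hb hab

section Chord

variable {E : Type*} [NormedAddCommGroup E] [NormedSpace ℝ E] {D : Set E}

def chordSet (D : Set E) (p v : E) : Set ℝ :=
  {t : ℝ | p + t • v ∈ D}

theorem zero_mem_chordSet {p : E} (hp : p ∈ D) (v : E) : (0 : ℝ) ∈ chordSet D p v := by
  simpa [chordSet] using hp

theorem smul_add_smul_chordSet_subset (hD : Convex ℝ D) {a b : ℝ} (ha : 0 ≤ a) (hb : 0 ≤ b)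
    (hab : a + b = 1) (p q v : E) :
    a • chordSet D p v + b • chordSet D q v ⊆ chordSet D (a • p + b • q) v := by
  rintro _ ⟨_, ⟨x, hx, rfl⟩, _, ⟨y, hy, rfl⟩, rfl⟩
  have hcomb : a • p + b • q + (a • x + b • y) • v = a • (p + x • v) + b • (q + y • v) := by
    module
  show a • p + b • q + (a • x + b • y) • v ∈ D
  rw [hcomb]
  exact hD hx hy ha hb hab

theorem Convex.chordSet (hD : Convex ℝ D) (p v : E) : Convex ℝ (chordSet D p v) :=
  fun _ hx _ hy a b ha hb hab => by
    simpa [Convex.combo_self hab] using smul_add_smul_chordSet_subset hD ha hb hab p p v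
      (add_mem_add (smul_mem_smul_set hx) (smul_mem_smul_set hy))

theorem Bornology.IsBounded.chordSet (hD : IsBounded D) (p : E) {v : E} (hv : v ≠ 0) :
    IsBounded (chordSet D p v) := by
  obtain ⟨C, hC⟩ := hD.exists_norm_le
  refine isBounded_iff_forall_norm_le.2 ⟨(C + ‖p‖) / ‖v‖, fun t ht => ?_⟩
  rw [le_div_iff₀ (norm_pos_iff.2 hv), ← norm_smul]
  calc ‖t • v‖ = ‖(p + t • v) - p‖ := by rw [add_sub_cancel_left]
    _ ≤ ‖p + t • v‖ + ‖p‖ := norm_sub_le _ _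
    _ ≤ C + ‖p‖ := by gcongr; exact hC _ ht

end Chord

section Inaccessibility

variable {n : ℕ} {D : Set (EuclideanSpace ℝ (Fin n))}

theorem segLen_eq_sSup_sub_sInf (hConv : Convex ℝ D) (hBdd : IsBounded D)
    {p : EuclideanSpace ℝ (Fin n)} (hp : p ∈ D) {v : EuclideanSpace ℝ (Fin n)} (hv : v ≠ 0) :
    segLen D p v = sSup (chordSet D p v) - sInf (chordSet D p v) := by
  have hb := hBdd.chordSet p hv
  rw [segLen, show {t : ℝ | p + t • v ∈ D} = chordSet D p v from rfl,
    (hConv.chordSet p v).isPreconnected.connectedComponentIn (zero_mem_chordSet hp v),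
    Real.volume_eq_of_isPreconnected (hConv.chordSet p v).isPreconnected hb,
    ENNReal.toReal_ofReal (sub_nonneg.2 (csInf_le_csSup
      (nonempty_of_mem (zero_mem_chordSet hp v)) hb.bddBelow hb.bddAbove))]

theorem segLen_concaveOn (hConv : Convex ℝ D) (hBdd : IsBounded D)
    {v : EuclideanSpace ℝ (Fin n)} (hv : v ≠ 0) :
    ConcaveOn ℝ D (fun p => segLen D p v) := by
  refine ⟨hConv, fun p hp q hq a b ha hb hab => ?_⟩
  dsimp only [smul_eq_mul]
  rw [segLen_eq_sSup_sub_sInf hConv hBdd hp hv,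
    segLen_eq_sSup_sub_sInf hConv hBdd hq hv,
    segLen_eq_sSup_sub_sInf hConv hBdd (hConv hp hq ha hb hab) hv]
  exact smul_add_smul_length_le ⟨0, zero_mem_chordSet hp v⟩ ⟨0, zero_mem_chordSet hq v⟩
    (hBdd.chordSet p hv) (hBdd.chordSet q hv) (hBdd.chordSet _ hv) ha hb
    (smul_add_smul_chordSet_subset hConv ha hb hab p q v)

theorem inacc_concaveOn (hConv : Convex ℝ D) (hBdd : IsBounded D) :
    ConcaveOn ℝ D (inacc D) :=
  ConcaveOn.sInf_image hConv
    (fun _ hv => segLen_concaveOn hConv hBdd (ne_zero_of_mem_unit_sphere ⟨_, hv⟩))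
    (fun _ _ => ⟨0, forall_mem_image.2 fun _ _ => ENNReal.toReal_nonneg⟩)

end Inaccessibility

theorem frontier_Dset_inter_general {n : ℕ} (D : Set (EuclideanSpace ℝ (Fin n)))
    (hOpen : IsOpen D) (hBdd : Bornology.IsBounded D)
    (hConv : Convex ℝ D) :
    ∀ r ∈ Set.Ioo (0 : ℝ) (Rmax D),
      frontier {p | p ∈ D ∧ r < inacc D p} ∩ D = {p | p ∈ D ∧ inacc D p = r} := by
  rintro r ⟨hr0, hrR⟩
  have hne : (inacc D '' D).Nonempty := nonempty_iff_ne_empty.2 fun h => by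
    rw [Rmax, h, Real.sSup_empty] at hrR
    exact hrR.not_gt hr0
  obtain ⟨_, ⟨q, hq, rfl⟩, hrq⟩ := exists_lt_of_lt_csSup hne hrR
  have hconc := inacc_concaveOn hConv hBdd
  exact hconc.frontier_superlevel_inter hOpen (hconc.continuousOn hOpen) hq hrq

/-- for a bounded convex domain `D ⊂ ℝⁿ` with `R = max r` and any
`r ∈ (0, R)`, the intersection of the topological boundary of `D_r = {p ∈ D | r(p) > r}`
with `D` is the level set `{p ∈ D | r(p) = r}`. -/
theorem frontier_Dset_inter {n : ℕ} (D : Set (EuclideanSpace ℝ (Fin n)))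
    (hOpen : IsOpen D) (hNe : D.Nonempty) (hBdd : Bornology.IsBounded D)
    (hConv : Convex ℝ D) :
    ∀ r ∈ Set.Ioo (0 : ℝ) (Rmax D),
      frontier {p | p ∈ D ∧ r < inacc D p} ∩ D = {p | p ∈ D ∧ inacc D p = r} :=
  frontier_Dset_inter_general D hOpen hBdd hConv
end
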